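/- Let M be a maximal proper quadratic module in a *-ring R. Then the ideal J_M = {a ∈ R : a·u·u*·a* ∈ M ∩ (−M) for all u ∈ R} is *-invariant: if a ∈ J_M then a* ∈ J_M. -/

import Mathlib

/-!
Put `c = u⋆ a`, so that `a⋆ (u u⋆) a = c⋆ c` and `c` again lies in `J_M`; since `c⋆ c ∈ M`
automatically, everything comes down to `-(c⋆ c) ∈ M`. By maximality it suffices that
adjoining `-g`, `g = c⋆ c`, keeps `M` proper. The quadratic module generated by `M` and `-g`
is `M - C`, where `C` is the additive cone spanned by the conjugates `r g r⋆`, and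
`-1 = m - σ` with `m ∈ M`, `σ ∈ C` would give `-1 = -σ² + 2m + m² ∈ M` as soon as `-σ² ∈ M`.
The latter reduces to generators `R = r g r⋆`, `S = s g s⋆`: `c ∈ J_M` puts `R²` and
`R S + S R + e e⋆`, `e = r g s⋆ + s g r⋆`, into `M ∩ -M`.
-/

def IsQuadraticModule {R : Type*} [Ring R] [StarRing R] (M : Set R) : Prop :=
  (∀ a ∈ M, star a = a) ∧ (1 : R) ∈ M ∧ (∀ a ∈ M, ∀ b ∈ M, a + b ∈ M) ∧
    ∀ r : R, ∀ a ∈ M, r * a * star r ∈ M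

def IsProperQuadraticModule {R : Type*} [Ring R] [StarRing R] (M : Set R) : Prop :=
  IsQuadraticModule M ∧ (-1 : R) ∉ M

def IsMaximalProperQuadraticModule {R : Type*} [Ring R] [StarRing R] (M : Set R) : Prop :=
  IsProperQuadraticModule M ∧
    ∀ M' : Set R, IsProperQuadraticModule M' → M ⊆ M' → M' = M

def qmIdeal {R : Type*} [Ring R] [StarRing R] (M : Set R) : Set R :=
  {a : R | ∀ u : R, a * (u * star u) * star a ∈ M ∩ (-M)}

theorem neg_mem_inter_neg {α : Type*} [InvolutiveNeg α] {s : Set α} {a : α}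
    (ha : a ∈ s ∩ -s) : -a ∈ s ∩ -s :=
  ⟨ha.2, by simpa using ha.1⟩

section

variable {R : Type*} [Ring R] [StarRing R] {M : Set R}

namespace IsQuadraticModule

variable (hM : IsQuadraticModule M)
include hM

theorem star_eq {a : R} (ha : a ∈ M) : star a = a := hM.1 a ha

theorem one_mem : (1 : R) ∈ M := hM.2.1

theorem add_mem {a b : R} (ha : a ∈ M) (hb : b ∈ M) : a + b ∈ M := hM.2.2.1 a ha b hb

theorem conj_mem (r : R) {a : R} (ha : a ∈ M) : r * a * star r ∈ M := hM.2.2.2 r a ha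

theorem zero_mem : (0 : R) ∈ M := by simpa using hM.conj_mem 0 hM.one_mem

theorem mul_star_self_mem (r : R) : r * star r ∈ M := by
  simpa using hM.conj_mem r hM.one_mem

theorem mul_self_mem {a : R} (ha : a ∈ M) : a * a ∈ M := by
  simpa [hM.star_eq ha] using hM.mul_star_self_mem a

theorem add_mem_supp {a b : R} (ha : a ∈ M ∩ -M) (hb : b ∈ M ∩ -M) : a + b ∈ M ∩ -M :=
  ⟨hM.add_mem ha.1 hb.1, by simpa [neg_add_rev] using hM.add_mem hb.2 ha.2⟩

theorem sub_mem_supp {a b : R} (ha : a ∈ M ∩ -M) (hb : b ∈ M ∩ -M) : a - b ∈ M ∩ -M := by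
  simpa [sub_eq_add_neg] using hM.add_mem_supp ha (neg_mem_inter_neg hb)

theorem conj_mem_supp (r : R) {a : R} (ha : a ∈ M ∩ -M) : r * a * star r ∈ M ∩ -M :=
  ⟨hM.conj_mem r ha.1, by simpa using hM.conj_mem r ha.2⟩

theorem polar_mem_supp (x y : R) {z : R} (hz : z ∈ M ∩ -M) :
    x * z * star y + y * z * star x ∈ M ∩ -M := by
  have h : x * z * star y + y * z * star x =
      (x + y) * z * star (x + y) - x * z * star x - y * z * star y := by
    simp only [star_add]; noncomm_ring
  rw [h]
  exact hM.sub_mem_supp (hM.sub_mem_supp (hM.conj_mem_supp _ hz) (hM.conj_mem_supp _ hz))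
    (hM.conj_mem_supp _ hz)

end IsQuadraticModule

namespace qmIdeal

variable (hM : IsQuadraticModule M)
include hM

theorem mul_mem_left (r : R) {a : R} (ha : a ∈ qmIdeal M) : r * a ∈ qmIdeal M := by
  intro u
  simpa only [star_mul, mul_assoc] using hM.conj_mem_supp r (ha u)

theorem polar_mem_supp {c : R} (hc : c ∈ qmIdeal M) (u v : R) :
    c * (u * star v + v * star u) * star c ∈ M ∩ -M := by
  have h : c * (u * star v + v * star u) * star c =
      c * ((u + v) * star (u + v)) * star c - c * (u * star u) * star c
        - c * (v * star v) * star c := by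
    simp only [star_add]; noncomm_ring
  rw [h]
  exact hM.sub_mem_supp (hM.sub_mem_supp (hc _) (hc _)) (hc _)

theorem conj_sq_mem_supp {c : R} (hc : c ∈ qmIdeal M) (r : R) :
    (r * (star c * c) * star r) * (r * (star c * c) * star r) ∈ M ∩ -M := by
  have h := hM.conj_mem_supp (r * star c) (hc (star r))
  simp only [star_mul, star_star] at h
  convert h using 1
  noncomm_ring

/-- With `x = r c⋆`, `y = s c⋆`, `Z = c (r⋆ s + s⋆ r) c⋆`, the element `R S + S R + e e⋆` equals
`x Z y⋆ + y Z x⋆ + x (c s⋆ s c⋆) x⋆ + y (c r⋆ r c⋆) y⋆`. -/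
theorem neg_anticomm_conj_mem {c : R} (hc : c ∈ qmIdeal M) (r s : R) :
    -((r * (star c * c) * star r) * (s * (star c * c) * star s)
      + (s * (star c * c) * star s) * (r * (star c * c) * star r)) ∈ M := by
  set e := r * (star c * c) * star s + s * (star c * c) * star r
  have hsupp : (r * (star c * c) * star r) * (s * (star c * c) * star s)
      + (s * (star c * c) * star s) * (r * (star c * c) * star r) + e * star e ∈ M ∩ -M := by
    have h := hM.add_mem_supp
      (hM.add_mem_supp (hM.polar_mem_supp (r * star c) (s * star c)
        (polar_mem_supp hM hc (star r) (star s)))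
        (hM.conj_mem_supp (r * star c) (hc (star s))))
      (hM.conj_mem_supp (s * star c) (hc (star r)))
    simp only [e, star_add, star_mul, star_star] at h ⊢
    convert h using 1
    noncomm_ring
  simpa using hM.add_mem (hM.mul_star_self_mem e) hsupp.2

end qmIdeal

def conjCone (g : R) : AddSubmonoid R :=
  AddSubmonoid.closure (Set.range fun r => r * g * star r)

theorem self_mem_conjCone (g : R) : g ∈ conjCone g :=
  AddSubmonoid.subset_closure ⟨1, by simp⟩

theorem conj_mem_conjCone {g σ : R} (hσ : σ ∈ conjCone g) (r : R) :
    r * σ * star r ∈ conjCone g := by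
  induction hσ using AddSubmonoid.closure_induction with
  | mem x hx =>
    obtain ⟨s, rfl⟩ := hx
    exact AddSubmonoid.subset_closure ⟨r * s, by simp only [star_mul]; noncomm_ring⟩
  | zero => simp
  | add x y _ _ hx hy => simpa only [mul_add, add_mul] using add_mem hx hy

theorem IsQuadraticModule.neg_mul_self_mem_closure (hM : IsQuadraticModule M) {S : Set R}
    (hsq : ∀ x ∈ S, -(x * x) ∈ M) (hanti : ∀ x ∈ S, ∀ y ∈ S, -(x * y + y * x) ∈ M)
    {σ : R} (hσ : σ ∈ AddSubmonoid.closure S) : -(σ * σ) ∈ M := by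
  have hanti' : ∀ σ ∈ AddSubmonoid.closure S, ∀ τ ∈ AddSubmonoid.closure S,
      -(σ * τ + τ * σ) ∈ M := by
    intro σ hσ τ hτ
    induction hσ, hτ using AddSubmonoid.closure_induction₂ with
    | mem x y hx hy => exact hanti x hx y hy
    | zero_left | zero_right => simpa using hM.zero_mem
    | add_left x y z _ _ _ hx hy | add_right x y z _ _ _ hx hy =>
      convert hM.add_mem hx hy using 1; noncomm_ring
  induction hσ using AddSubmonoid.closure_induction with
  | mem x hx => exact hsq x hx
  | zero => simpa using hM.zero_mem
  | add x y hxS hyS hx hy =>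
    convert hM.add_mem (hM.add_mem hx hy) (hanti' x hxS y hyS) using 1; noncomm_ring

def adjoinNeg (M : Set R) (g : R) : Set R :=
  {s | star s = s ∧ ∃ σ ∈ conjCone g, s + σ ∈ M}

namespace IsQuadraticModule

variable (hM : IsQuadraticModule M)
include hM

theorem subset_adjoinNeg (g : R) : M ⊆ _root_.adjoinNeg M g :=
  fun m hm => ⟨hM.star_eq hm, 0, (conjCone g).zero_mem, by simpa using hm⟩

theorem neg_mem_adjoinNeg {g : R} (hg : star g = g) : -g ∈ _root_.adjoinNeg M g :=
  ⟨by rw [star_neg, hg], g, self_mem_conjCone g, by simpa using hM.zero_mem⟩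

theorem adjoinNeg (g : R) : IsQuadraticModule (_root_.adjoinNeg M g) := by
  refine ⟨fun a ha => ha.1, hM.subset_adjoinNeg g hM.one_mem, ?_, ?_⟩
  · rintro a ⟨ha, σ, hσ, haσ⟩ b ⟨hb, τ, hτ, hbτ⟩
    refine ⟨by rw [star_add, ha, hb], σ + τ, (conjCone g).add_mem hσ hτ, ?_⟩
    convert hM.add_mem haσ hbτ using 1; abel
  · rintro r a ⟨ha, σ, hσ, haσ⟩
    refine ⟨by simp only [star_mul, star_star, ha, mul_assoc], r * σ * star r,
      conj_mem_conjCone hσ r, ?_⟩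
    simpa only [mul_add, add_mul] using hM.conj_mem r haσ

theorem neg_one_notMem_adjoinNeg (hproper : (-1 : R) ∉ M) {g : R}
    (hsq : ∀ σ ∈ conjCone g, -(σ * σ) ∈ M) : (-1 : R) ∉ _root_.adjoinNeg M g := by
  rintro ⟨-, σ, hσ, hm⟩
  apply hproper
  convert hM.add_mem (hM.add_mem (hM.add_mem (hsq σ hσ) hm) hm) (hM.mul_self_mem hm) using 1
  noncomm_ring

end IsQuadraticModule

theorem IsMaximalProperQuadraticModule.neg_mem_of_neg_mul_self_mem
    (hM : IsMaximalProperQuadraticModule M) {g : R} (hg : star g = g)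
    (hsq : ∀ σ ∈ conjCone g, -(σ * σ) ∈ M) : -g ∈ M := by
  have hqm : IsQuadraticModule M := hM.1.1
  rw [← hM.2 _ ⟨hqm.adjoinNeg g, hqm.neg_one_notMem_adjoinNeg hM.1.2 hsq⟩
    (hqm.subset_adjoinNeg g)]
  exact hqm.neg_mem_adjoinNeg hg

theorem IsMaximalProperQuadraticModule.neg_star_mul_self_mem_of_mem_qmIdeal
    (hM : IsMaximalProperQuadraticModule M) {c : R} (hc : c ∈ qmIdeal M) :
    -(star c * c) ∈ M := by
  have hqm : IsQuadraticModule M := hM.1.1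
  refine hM.neg_mem_of_neg_mul_self_mem (by simp) fun σ hσ => ?_
  refine hqm.neg_mul_self_mem_closure ?_ ?_ hσ
  · rintro _ ⟨r, rfl⟩
    exact (qmIdeal.conj_sq_mem_supp hqm hc r).2
  · rintro _ ⟨r, rfl⟩ _ ⟨s, rfl⟩
    exact qmIdeal.neg_anticomm_conj_mem hqm hc r s

end

theorem qmIdeal_star_invariant {R : Type*} [Ring R] [StarRing R]
    {M : Set R} (hM : IsMaximalProperQuadraticModule M) :
    ∀ a ∈ qmIdeal M, star a ∈ qmIdeal M := by
  intro a ha u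
  have hc : star u * a ∈ qmIdeal M := qmIdeal.mul_mem_left hM.1.1 (star u) ha
  have h : star a * (u * star u) * star (star a) = star (star u * a) * (star u * a) := by
    simp only [star_mul, star_star, mul_assoc]
  rw [h]
  exact ⟨by simpa using hM.1.1.mul_star_self_mem (star (star u * a)),
    hM.neg_star_mul_self_mem_of_mem_qmIdeal hc⟩
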